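/- In the finite-partition expert model: fix a state r, experts j = 1,...,m with fixed vectors a_j ∈ R^p and noisy feedback ĝ_{j,s,i} = g_{j,s} + ε_{j,s,i} where the ε_{j,s,i} are independent, mean zero, with common variance v, and g_{j,s} = g_{j,r} for all s in a pooling class F of size K containing r. Let the BP estimator be Ĝ = ∑_j a_j (1/n)∑_i ε_{j,r,i} + G_true and the SG estimator be G̃ = ∑_j a_j (1/(nK))∑_{s∈F}∑_i ε_{j,s,i} + G_true, where G_true = ∑_j a_j g_{j,r}. Then E||Ĝ - G_true||² = K · E||G̃ - G_true||². -/

import Mathlib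

/-!
Independent centred noise variables with common second moment `v` are orthogonal in `L²(μ)`.
An expert's noise, averaged with weight `c` over a block of `N` samples, therefore has second
moment `c² N v` and is orthogonal to the other experts' noise, so that
`E‖∑ⱼ Yⱼ aⱼ‖² = c² N v ∑ⱼ ‖aⱼ‖²`. Backpropagation has `c = 1/n`, `N = n` and the synthetic
gradient `c = 1/(nK)`, `N = nK`; the two mean squared errors are `v ∑ⱼ ‖aⱼ‖² / n` and
`v ∑ⱼ ‖aⱼ‖² / (nK)`.
-/

open MeasureTheory ProbabilityTheory Finset

section

variable {Ω : Type*} {mΩ : MeasurableSpace Ω} {μ : Measure Ω}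

lemma integral_mul_eq_ite_of_pairwise_indepFun {ι : Type*} [DecidableEq ι] {X : ι → Ω → ℝ}
    (hmeas : ∀ q, AEStronglyMeasurable (X q) μ)
    (hindep : Pairwise fun q q' => IndepFun (X q) (X q') μ)
    (hmean : ∀ q, ∫ ω, X q ω ∂μ = 0) {v : ℝ} (hv : ∀ q, ∫ ω, X q ω ^ 2 ∂μ = v) (q q' : ι) :
    ∫ ω, X q ω * X q' ω ∂μ = if q = q' then v else 0 := by
  split_ifs with h
  · subst h
    simpa only [sq] using hv q
  · simpa [hmean] using (hindep h).integral_mul_eq_mul_integral (hmeas q) (hmeas q')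

lemma integral_sum_mul_sum_eq_card_inter_mul {ι : Type*} [DecidableEq ι] {X : ι → Ω → ℝ}
    (hmem : ∀ q, MemLp (X q) 2 μ) {v : ℝ}
    (hcov : ∀ q q', ∫ ω, X q ω * X q' ω ∂μ = if q = q' then v else 0) (A B : Finset ι) :
    ∫ ω, (∑ q ∈ A, X q ω) * (∑ q' ∈ B, X q' ω) ∂μ = #(A ∩ B) * v := by
  have hint : ∀ q q', Integrable (fun ω => X q ω * X q' ω) μ :=
    fun q q' => (hmem q).integrable_mul (hmem q')
  simp_rw [sum_mul_sum]
  rw [integral_finsetSum _ fun q _ => integrable_finsetSum _ fun q' _ => hint q q']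
  simp_rw [integral_finsetSum _ fun q' _ => hint _ q', hcov, sum_ite_eq, sum_ite_mem,
    sum_const, nsmul_eq_mul]

lemma integral_norm_sq_sum_smul_of_orthogonal {κ E : Type*} [Fintype κ] [DecidableEq κ]
    [NormedAddCommGroup E] [InnerProductSpace ℝ E] {Y : κ → Ω → ℝ}
    (hmem : ∀ j, MemLp (Y j) 2 μ) {σ : ℝ}
    (hcov : ∀ j k, ∫ ω, Y j ω * Y k ω ∂μ = if j = k then σ else 0) (a : κ → E) :
    ∫ ω, ‖∑ j, Y j ω • a j‖ ^ 2 ∂μ = σ * ∑ j, ‖a j‖ ^ 2 := by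
  have hint : ∀ j k, Integrable (fun ω => Y j ω * Y k ω * inner ℝ (a j) (a k)) μ :=
    fun j k => ((hmem j).integrable_mul (hmem k)).mul_const _
  have hexpand : ∀ ω, ‖∑ j, Y j ω • a j‖ ^ 2
      = ∑ j, ∑ k, Y j ω * Y k ω * inner ℝ (a j) (a k) := by
    intro ω
    simp_rw [← real_inner_self_eq_norm_sq, sum_inner, inner_sum, real_inner_smul_left,
      real_inner_smul_right, mul_assoc]
  simp_rw [hexpand]
  rw [integral_finsetSum _ fun j _ => integrable_finsetSum _ fun k _ => hint j k]
  simp_rw [integral_finsetSum _ fun k _ => hint _ k, integral_mul_const, hcov, ite_mul,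
    zero_mul, sum_ite_eq, mem_univ, if_true, real_inner_self_eq_norm_sq, mul_sum]

lemma integral_norm_sq_sum_block_smul {κ ι E : Type*} [Fintype κ] [DecidableEq κ] [DecidableEq ι]
    [NormedAddCommGroup E] [InnerProductSpace ℝ E] {X : κ × ι → Ω → ℝ}
    (hmem : ∀ q, MemLp (X q) 2 μ) {v : ℝ}
    (hcov : ∀ q q', ∫ ω, X q ω * X q' ω ∂μ = if q = q' then v else 0)
    (S : Finset ι) (c : ℝ) (a : κ → E) :
    ∫ ω, ‖∑ j, (c * ∑ q ∈ {j} ×ˢ S, X q ω) • a j‖ ^ 2 ∂μ = c ^ 2 * #S * v * ∑ j, ‖a j‖ ^ 2 := by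
  refine integral_norm_sq_sum_smul_of_orthogonal
    (fun j => (memLp_finsetSum _ fun q _ => hmem q).const_mul c) (fun j k => ?_) a
  simp_rw [mul_mul_mul_comm, integral_const_mul, integral_sum_mul_sum_eq_card_inter_mul hmem hcov,
    product_inter_product, inter_self, card_product]
  split_ifs with h
  · rw [h, inter_self, card_singleton, one_mul]; ring
  · rw [singleton_inter_of_notMem (mem_singleton.not.mpr h), card_empty, zero_mul, Nat.cast_zero,
      zero_mul, mul_zero]

end

theorem expert_network_mse_ratio_general
    {Ω : Type*} {mΩ : MeasurableSpace Ω} {μ : Measure Ω}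
    (m p K n : ℕ)
    (a : Fin m → EuclideanSpace ℝ (Fin p))
    (ε : Fin m × Fin K × Fin n → Ω → ℝ)
    (hmem : ∀ q, MemLp (ε q) 2 μ)
    (hindep : iIndepFun ε μ)
    (hmean : ∀ q, (∫ ω, ε q ω ∂μ) = 0)
    (v : ℝ) (hv : ∀ q, (∫ ω, (ε q ω) ^ 2 ∂μ) = v)
    (r : Fin K)
    (Gtrue : EuclideanSpace ℝ (Fin p)) :
    ∫ ω, ‖(∑ j, ((n : ℝ)⁻¹ * ∑ i, ε (j, r, i) ω) • a j + Gtrue) - Gtrue‖ ^ 2 ∂μ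
      = K * ∫ ω, ‖(∑ j, (((n : ℝ) * K)⁻¹ * ∑ s, ∑ i, ε (j, s, i) ω) • a j + Gtrue)
          - Gtrue‖ ^ 2 ∂μ := by
  have hcov := integral_mul_eq_ite_of_pairwise_indepFun (fun q => (hmem q).aestronglyMeasurable)
    (fun q q' h => hindep.indepFun h) hmean hv
  have hBP := integral_norm_sq_sum_block_smul hmem hcov ({r} ×ˢ univ) (n : ℝ)⁻¹ a
  have hSG := integral_norm_sq_sum_block_smul hmem hcov (univ ×ˢ univ) ((n : ℝ) * K)⁻¹ a
  simp only [sum_product, sum_singleton, card_product, card_singleton, card_univ,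
    Fintype.card_fin, one_mul, Nat.cast_mul] at hBP hSG
  simp only [add_sub_cancel_right, hBP, hSG]
  have hK : (K : ℝ) ≠ 0 := by exact_mod_cast r.pos.ne'
  rcases eq_or_ne (n : ℝ) 0 with hn | hn
  · -- both estimators vanish, since `(0 : ℝ)⁻¹ = 0`
    simp [hn]
  · field_simp

/-- Finite-partition expert model (Lemma 5 / Theorem 5): the backpropagation estimator,
which averages `n` noise samples at state `r`, has MSE exactly `K` times that of the
synthetic-gradient estimator, which pools `n·K` samples over the equivalence class. -/
theorem expert_network_mse_ratio
    {Ω : Type*} {mΩ : MeasurableSpace Ω} {μ : Measure Ω} [IsProbabilityMeasure μ]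
    (m p K n : ℕ) (hK : 0 < K) (hn : 0 < n)
    (a : Fin m → EuclideanSpace ℝ (Fin p))
    (ε : Fin m × Fin K × Fin n → Ω → ℝ)
    (hmem : ∀ q, MemLp (ε q) 2 μ)
    (hindep : iIndepFun ε μ)
    (hmean : ∀ q, (∫ ω, ε q ω ∂μ) = 0)
    (v : ℝ) (hv : ∀ q, (∫ ω, (ε q ω) ^ 2 ∂μ) = v)
    (r : Fin K)
    (g : Fin m → Fin K → ℝ) (hg : ∀ j s, g j s = g j r)
    (Gtrue : EuclideanSpace ℝ (Fin p)) (hGtrue : Gtrue = ∑ j, g j r • a j) :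
    ∫ ω, ‖(∑ j, ((n : ℝ)⁻¹ * ∑ i, ε (j, r, i) ω) • a j + Gtrue) - Gtrue‖ ^ 2 ∂μ
      = K * ∫ ω, ‖(∑ j, (((n : ℝ) * K)⁻¹ * ∑ s, ∑ i, ε (j, s, i) ω) • a j + Gtrue)
          - Gtrue‖ ^ 2 ∂μ :=
  expert_network_mse_ratio_general (mΩ := mΩ) m p K n a ε hmem hindep hmean v hv r Gtrue
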